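/- Let α₁, β₁, γ₁, α₂, β₂, γ₂ be complex numbers and define H₀ = [[0,1,1,0],[0,1−γ₁,0,1],[0,0,1−γ₂,1],[0,0,0,2−γ₁−γ₂]] and H₁ = [[0,0,0,0],[−α₁β₁, γ₁−1−α₁−β₁, 0, 0],[−α₂β₂, 0, γ₂−1−α₂−β₂, 0],[0, −α₂β₂, −α₁β₁, γ₁+γ₂−2−α₁−α₂−β₁−β₂]]. Then for every t ∈ ℂ, det(t·I₄ + H₀ + H₁) = (t − α₁ − α₂)(t − β₁ − β₂)(t − α₁ − β₂)(t − β₁ − α₂). -/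

import Mathlib

set_option linter.unusedVariables false

noncomputable section
open Matrix

/-- The residue matrix H₀ at x = 0. -/
def H0 (α₁ β₁ γ₁ α₂ β₂ γ₂ : ℂ) : Matrix (Fin 4) (Fin 4) ℂ :=
  !![0, 1, 1, 0;
     0, 1-γ₁, 0, 1;
     0, 0, 1-γ₂, 1;
     0, 0, 0, 2-γ₁-γ₂]

/-- The residue matrix H₁ at x = 1. -/
def H1 (α₁ β₁ γ₁ α₂ β₂ γ₂ : ℂ) : Matrix (Fin 4) (Fin 4) ℂ :=
  !![0, 0, 0, 0;
     -(α₁*β₁), γ₁-1-α₁-β₁, 0, 0;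
     -(α₂*β₂), 0, γ₂-1-α₂-β₂, 0;
     0, -(α₂*β₂), -(α₁*β₁), γ₁+γ₂-2-α₁-α₂-β₁-β₂]

/-!
Since `w` is a tensor product of the vectors `(fᵢ, x fᵢ')`, the residue `-(H₀ + H₁)` at infinity
is, up to the order of the basis, the Kronecker sum `C₂ ⊗ 1 + 1 ⊗ C₁` of the residues at infinity
`Cᵢ = [[0, -1], [αᵢβᵢ, αᵢ + βᵢ]]` of the two Gauss systems; the `γᵢ` cancel. Conjugating `Cᵢ` by
the unimodular matrix `[[1, 0], [-αᵢ, 1]]` makes it upper triangular with diagonal `(αᵢ, βᵢ)`, so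
conjugating by the Kronecker product of these makes the Kronecker sum upper triangular for the
lexicographic order, with diagonal entries the four sums of an exponent of each equation.
-/

open scoped Kronecker

namespace Matrix

variable {R m n : Type*} [DecidableEq m] [DecidableEq n]

def kroneckerSum [Semiring R] (A : Matrix m m R) (B : Matrix n n R) :
    Matrix (m × n) (m × n) R :=
  A ⊗ₖ 1 + 1 ⊗ₖ B

theorem kroneckerSum_mul_kronecker [CommSemiring R] [Fintype m] [Fintype n]
    {A P S : Matrix m m R} {B Q T : Matrix n n R} (hP : A * P = P * S) (hQ : B * Q = Q * T) :
    kroneckerSum A B * (P ⊗ₖ Q) = (P ⊗ₖ Q) * kroneckerSum S T := by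
  simp only [kroneckerSum, add_mul, mul_add, ← mul_kronecker_mul, hP, hQ, one_mul, mul_one]

theorem blockTriangular_kroneckerSum [Semiring R] [LinearOrder m] [LinearOrder n]
    {S : Matrix m m R} {T : Matrix n n R} (hS : S.IsUpperTriangular) (hT : T.IsUpperTriangular) :
    (kroneckerSum S T).BlockTriangular toLex := by
  rintro ⟨i, j⟩ ⟨k, l⟩ hlt
  rcases Prod.Lex.toLex_lt_toLex.mp hlt with hki | ⟨rfl, hlj⟩
  · simp [kroneckerSum, hS hki, hki.ne', one_apply]
  · simp [kroneckerSum, hT hlj, hlj.ne']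

section CommRing

variable [CommRing R]

theorem det_smul_one_sub_eq_of_mul_eq_mul [Fintype m] {K K' U : Matrix m m R}
    (hU : IsUnit U.det) (h : K * U = U * K') (t : R) : det (t • 1 - K) = det (t • 1 - K') := by
  have hconj : (t • 1 - K) * U = U * (t • 1 - K') := by
    rw [sub_mul, mul_sub, h, Matrix.smul_mul, Matrix.mul_smul, one_mul, mul_one]
  have hdet := congrArg det hconj
  rw [det_mul, det_mul, mul_comm] at hdet
  exact hU.mul_left_cancel hdet

theorem det_smul_one_sub_kroneckerSum [Fintype m] [Fintype n] [LinearOrder m] [LinearOrder n]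
    {S : Matrix m m R} {T : Matrix n n R} (hS : S.IsUpperTriangular) (hT : T.IsUpperTriangular)
    (t : R) : det (t • 1 - kroneckerSum S T) = ∏ p : m × n, (t - (S p.1 p.1 + T p.2 p.2)) := by
  have hK : (t • 1 - kroneckerSum S T).BlockTriangular toLex := by
    rw [smul_one_eq_diagonal]
    exact (blockTriangular_diagonal _).sub (blockTriangular_kroneckerSum hS hT)
  rw [← det_reindex_self toLex, det_of_isUpperTriangular (blockTriangular_reindex_iff.mpr hK)]
  exact Fintype.prod_equiv ofLex _ _ fun p => by simp [kroneckerSum]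

theorem det_smul_one_sub_kroneckerSum_of_mul_eq_mul [Fintype m] [Fintype n]
    [LinearOrder m] [LinearOrder n] {A P S : Matrix m m R} {B Q T : Matrix n n R}
    (hP : IsUnit P.det) (hQ : IsUnit Q.det) (hAP : A * P = P * S) (hBQ : B * Q = Q * T)
    (hS : S.IsUpperTriangular) (hT : T.IsUpperTriangular) (t : R) :
    det (t • 1 - kroneckerSum A B) = ∏ p : m × n, (t - (S p.1 p.1 + T p.2 p.2)) := by
  have hPQ : IsUnit (P ⊗ₖ Q).det := by
    rw [det_kronecker]
    exact (hP.pow _).mul (hQ.pow _)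
  rw [det_smul_one_sub_eq_of_mul_eq_mul hPQ (kroneckerSum_mul_kronecker hAP hBQ),
    det_smul_one_sub_kroneckerSum hS hT]

end CommRing

theorem isUpperTriangular_fin_two [Zero R] (a b c : R) : (!![a, b; 0, c]).IsUpperTriangular := by
  intro i j hij
  fin_cases i <;> fin_cases j <;> simp_all

theorem reindex_finProdFinEquiv_two_two (M : Matrix (Fin 2 × Fin 2) (Fin 2 × Fin 2) R) :
    (reindex finProdFinEquiv finProdFinEquiv M : Matrix (Fin 4) (Fin 4) R) =
      M.submatrix ![(0, 0), (0, 1), (1, 0), (1, 1)] ![(0, 0), (0, 1), (1, 0), (1, 1)] := by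
  ext i j
  fin_cases i <;> fin_cases j <;> rfl

end Matrix

section GaussResidue

variable {R : Type*} [CommRing R]

/-- The residue at infinity of the system satisfied by `(f, x f')` for a solution `f` of the Gauss
equation with exponents `a, b` at infinity. -/
def gaussResidueInfty (a b : R) : Matrix (Fin 2) (Fin 2) R :=
  !![0, -1; a * b, a + b]

theorem gaussResidueInfty_mul (a b : R) :
    gaussResidueInfty a b * !![1, 0; -a, 1] = !![1, 0; -a, 1] * !![a, -1; 0, b] := by
  ext i j
  fin_cases i <;> fin_cases j <;> simp [gaussResidueInfty]
  ring

end GaussResidue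

theorem smul_one_add_H0_add_H1 (α₁ β₁ γ₁ α₂ β₂ γ₂ t : ℂ) :
    t • 1 + H0 α₁ β₁ γ₁ α₂ β₂ γ₂ + H1 α₁ β₁ γ₁ α₂ β₂ γ₂ =
      reindex finProdFinEquiv finProdFinEquiv
        (t • 1 - kroneckerSum (gaussResidueInfty α₂ β₂) (gaussResidueInfty α₁ β₁)) := by
  rw [reindex_finProdFinEquiv_two_two]
  ext i j
  fin_cases i <;> fin_cases j <;>
    simp [H0, H1, gaussResidueInfty, kroneckerSum, one_apply] <;> ring

/-- the characteristic polynomial of −(H₀+H₁) factors. -/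
theorem stmt_15 (α₁ β₁ γ₁ α₂ β₂ γ₂ : ℂ) :
    ∀ t : ℂ,
      Matrix.det (t • (1 : Matrix (Fin 4) (Fin 4) ℂ)
          + H0 α₁ β₁ γ₁ α₂ β₂ γ₂ + H1 α₁ β₁ γ₁ α₂ β₂ γ₂)
        = (t - α₁ - α₂) * (t - β₁ - β₂) * (t - α₁ - β₂) * (t - β₁ - α₂) := by
  intro t
  rw [smul_one_add_H0_add_H1, det_reindex_self,
    det_smul_one_sub_kroneckerSum_of_mul_eq_mul (by simp) (by simp)
      (gaussResidueInfty_mul α₂ β₂) (gaussResidueInfty_mul α₁ β₁)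
      (isUpperTriangular_fin_two _ _ _) (isUpperTriangular_fin_two _ _ _)]
  simp only [Fintype.prod_prod_type, Fin.prod_univ_two, of_apply, cons_val', cons_val_fin_one,
    cons_val_zero, cons_val_one]
  ring
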